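/- arXiv:1404.1522 — 7 statements merged into one kernel-verified Lean document; each statement's English description precedes it below -/
import Mathlib

section
/- Define L : ℤ → ℝ by L(x) = (1/(64(1−c)²))·( 2(1−c)·|B·ν^{|x+1|} + A·ν^{|x|}|² + (1+c)·|B·ν^{|x+1|} + (A+B)·ν^{|x|} + A·ν^{|x−1|}|² + 2(1−c)·|B·ν^{|x|} + A·ν^{|x−1|}|² ). Then Σ_{x∈ℤ} L(x) = (1/(8√2·(1−c)^{3/2}))·(|A|² + |B|² + 2ν·Re(A·conj(B))). -/
open Real Complex

set_option maxHeartbeats 4000000 in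
/-- the total mass of the limit measure `L` equals
`(1/(8√2·(1−c)^{3/2}))·(|A|² + |B|² + 2ν·Re(A·conj B))`. -/
theorem stmt_2 (θ : ℝ) (hθ : θ ∈ Set.Ioo 0 (2 * Real.pi)) (hθπ : θ ≠ Real.pi)
    (c s : ℝ) (hc : c = Real.cos θ) (hs : s = Real.sin θ)
    (α β γ : ℂ) (hnorm : ‖α‖ ^ 2 + ‖β‖ ^ 2 + ‖γ‖ ^ 2 = 1)
    (ν : ℝ) (hν : ν = (-(3 - c) + 2 * Real.sqrt (2 * (1 - c))) / (1 + c))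
    (A B : ℂ) (hA : A = ((2 * (1 - c) : ℝ) : ℂ) * α + ((Real.sqrt 2 * s : ℝ) : ℂ) * β)
    (hB : B = ((Real.sqrt 2 * s : ℝ) : ℂ) * β + ((2 * (1 - c) : ℝ) : ℂ) * γ)
    (L : ℤ → ℝ)
    (hL : ∀ x : ℤ, L x = (1 / (64 * (1 - c) ^ 2)) *
        (2 * (1 - c) * ‖B * (ν : ℂ) ^ (x + 1).natAbs + A * (ν : ℂ) ^ x.natAbs‖ ^ 2
          + (1 + c) * ‖B * (ν : ℂ) ^ (x + 1).natAbs + (A + B) * (ν : ℂ) ^ x.natAbs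
              + A * (ν : ℂ) ^ (x - 1).natAbs‖ ^ 2
          + 2 * (1 - c) * ‖B * (ν : ℂ) ^ x.natAbs + A * (ν : ℂ) ^ (x - 1).natAbs‖ ^ 2)) :
    ∑' x : ℤ, L x = (1 / (8 * Real.sqrt 2 * (1 - c) ^ ((3 : ℝ) / 2))) *
      (‖A‖ ^ 2 + ‖B‖ ^ 2 + 2 * ν * (A * (starRingEnd ℂ) B).re) := by
  obtain ⟨hθ0, hθ2⟩ := hθ
  have hpi := Real.pi_pos
  -- basic bounds on c
  have hc1 : c < 1 := by
    rcases lt_or_eq_of_le (hc ▸ Real.cos_le_one θ) with h | h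
    · exact h
    · exfalso
      rw [hc] at h
      rcases (Real.cos_eq_one_iff θ).mp h with ⟨n, hn⟩
      have : (0:ℝ) < n * (2 * Real.pi) := hn ▸ hθ0
      have : (n:ℝ) * (2 * Real.pi) < 1 * (2 * Real.pi) := by linarith [hn ▸ hθ2]
      have hn1 : (n:ℝ) < 1 := lt_of_mul_lt_mul_right this (by positivity)
      have hn0 : (0:ℝ) < n := by
        by_contra h0
        push_neg at h0
        nlinarith
      have : (0:ℤ) < n := by exact_mod_cast hn0
      have : (1:ℤ) ≤ n := this
      have : (1:ℝ) ≤ (n:ℝ) := by exact_mod_cast this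
      linarith
  have hcm1 : -1 < c := by
    rcases lt_or_eq_of_le (hc ▸ Real.neg_one_le_cos θ) with h | h
    · exact h
    · exfalso
      rw [hc] at h
      rcases Real.cos_eq_neg_one_iff.mp h.symm with ⟨k, hk⟩
      have hk0 : (0:ℝ) < Real.pi + k * (2 * Real.pi) := hk ▸ hθ0
      have hk2 : Real.pi + (k:ℝ) * (2 * Real.pi) < 2 * Real.pi := hk ▸ hθ2
      have : (k:ℝ) < 1/2 := by nlinarith
      have : (-1/2 : ℝ) < k := by nlinarith
      have hkk : k = 0 := by
        have h1 : (k:ℝ) < 1 := by linarith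
        have h2 : (-1:ℝ) < k := by linarith
        have : (k:ℤ) < 1 := by exact_mod_cast h1
        have : (-1:ℤ) < k := by exact_mod_cast h2
        omega
      rw [hkk] at hk
      push_cast at hk
      exact hθπ (by linarith)
  have h1c : (0:ℝ) < 1 - c := by linarith
  set t := Real.sqrt (2 * (1 - c)) with ht
  have ht2 : t ^ 2 = 2 * (1 - c) := Real.sq_sqrt (by linarith)
  have ht0 : 0 < t := Real.sqrt_pos.mpr (by linarith)
  have htlt : t < 2 := by nlinarith
  have hνt : ν = (t - 2) / (t + 2) := by
    rw [hν, div_eq_div_iff (by linarith) (by linarith)]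
    linear_combination 2 * ht2
  have hc' : c = 1 - t ^ 2 / 2 := by linarith
  have hν2 : ν ^ 2 < 1 := by
    rw [hνt, div_pow]
    rw [div_lt_one (by positivity)]
    nlinarith
  have hν2' : (0:ℝ) < 1 - ν ^ 2 := by linarith
  -- factoring lemma for norms
  have habs : ∀ (n : ℕ) (z : ℂ), ‖(ν : ℂ) ^ n * z‖ ^ 2 = (ν ^ 2) ^ n * ‖z‖ ^ 2 := by
    intro n z
    rw [norm_mul, mul_pow, norm_pow, Complex.norm_real, Real.norm_eq_abs,
      ← pow_mul, mul_comm n 2, pow_mul, _root_.sq_abs]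
  -- values of L for positive integers
  have hLpos : ∀ n : ℕ, L ((n : ℤ) + 1) = (ν ^ 2) ^ n * L 1 := by
    intro n
    rw [hL, hL]
    have e1 : ((n : ℤ) + 1 + 1).natAbs = n + 2 := by omega
    have e2 : ((n : ℤ) + 1).natAbs = n + 1 := by omega
    have e3 : ((n : ℤ) + 1 - 1).natAbs = n := by omega
    have e4 : ((1 : ℤ) + 1).natAbs = 2 := by omega
    have e5 : ((1 : ℤ)).natAbs = 1 := by omega
    have e6 : ((1 : ℤ) - 1).natAbs = 0 := by omega
    rw [e1, e2, e3, e4, e5, e6]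
    have f1 : B * (ν : ℂ) ^ (n + 2) + A * (ν : ℂ) ^ (n + 1)
        = (ν : ℂ) ^ n * (B * (ν : ℂ) ^ 2 + A * (ν : ℂ) ^ 1) := by ring
    have f2 : B * (ν : ℂ) ^ (n + 2) + (A + B) * (ν : ℂ) ^ (n + 1) + A * (ν : ℂ) ^ n
        = (ν : ℂ) ^ n * (B * (ν : ℂ) ^ 2 + (A + B) * (ν : ℂ) ^ 1 + A * (ν : ℂ) ^ 0) := by ring
    have f3 : B * (ν : ℂ) ^ (n + 1) + A * (ν : ℂ) ^ n
        = (ν : ℂ) ^ n * (B * (ν : ℂ) ^ 1 + A * (ν : ℂ) ^ 0) := by ring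
    rw [f1, f2, f3, habs, habs, habs]
    ring
  -- values of L for negative integers
  have hLneg : ∀ n : ℕ, L (-((n : ℤ) + 1)) = (ν ^ 2) ^ n * L (-1) := by
    intro n
    rw [hL, hL]
    have e1 : (-((n : ℤ) + 1) + 1).natAbs = n := by omega
    have e2 : (-((n : ℤ) + 1)).natAbs = n + 1 := by omega
    have e3 : (-((n : ℤ) + 1) - 1).natAbs = n + 2 := by omega
    have e4 : ((-1 : ℤ) + 1).natAbs = 0 := by omega
    have e5 : ((-1 : ℤ)).natAbs = 1 := by omega
    have e6 : ((-1 : ℤ) - 1).natAbs = 2 := by omega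
    rw [e1, e2, e3, e4, e5, e6]
    have f1 : B * (ν : ℂ) ^ n + A * (ν : ℂ) ^ (n + 1)
        = (ν : ℂ) ^ n * (B * (ν : ℂ) ^ 0 + A * (ν : ℂ) ^ 1) := by ring
    have f2 : B * (ν : ℂ) ^ n + (A + B) * (ν : ℂ) ^ (n + 1) + A * (ν : ℂ) ^ (n + 2)
        = (ν : ℂ) ^ n * (B * (ν : ℂ) ^ 0 + (A + B) * (ν : ℂ) ^ 1 + A * (ν : ℂ) ^ 2) := by ring
    have f3 : B * (ν : ℂ) ^ (n + 1) + A * (ν : ℂ) ^ (n + 2)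
        = (ν : ℂ) ^ n * (B * (ν : ℂ) ^ 1 + A * (ν : ℂ) ^ 2) := by ring
    rw [f1, f2, f3, habs, habs, habs]
    ring
  have hgeo : HasSum (fun n : ℕ => (ν ^ 2) ^ n) (1 - ν ^ 2)⁻¹ :=
    hasSum_geometric_of_lt_one (sq_nonneg ν) (by linarith)
  have h1 : HasSum (fun n : ℕ => L ((n : ℤ) + 1)) ((1 - ν ^ 2)⁻¹ * L 1) := by
    have hfun : (fun n : ℕ => L ((n : ℤ) + 1)) = fun n : ℕ => (ν ^ 2) ^ n * L 1 :=
      funext hLpos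
    rw [hfun]
    exact hgeo.mul_right (L 1)
  have h2 : HasSum (fun n : ℕ => L (n : ℤ)) ((1 - ν ^ 2)⁻¹ * L 1 + L 0) := by
    have h1' : HasSum (fun n : ℕ => L (((n + 1 : ℕ)) : ℤ)) ((1 - ν ^ 2)⁻¹ * L 1) := by
      have hfun : (fun n : ℕ => L (((n + 1 : ℕ)) : ℤ)) = fun n : ℕ => L ((n : ℤ) + 1) := by
        funext n; push_cast; ring_nf
      rw [hfun]; exact h1
    have := (hasSum_nat_add_iff (f := fun n : ℕ => L (n : ℤ)) 1).mp h1'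
    simpa using this
  have h3 : HasSum (fun n : ℕ => L (-((n : ℤ) + 1))) ((1 - ν ^ 2)⁻¹ * L (-1)) := by
    have hfun : (fun n : ℕ => L (-((n : ℤ) + 1))) = fun n : ℕ => (ν ^ 2) ^ n * L (-1) :=
      funext hLneg
    rw [hfun]
    exact hgeo.mul_right (L (-1))
  have htot : HasSum L ((1 - ν ^ 2)⁻¹ * L 1 + L 0 + (1 - ν ^ 2)⁻¹ * L (-1)) := by
    refine HasSum.of_nat_of_neg_add_one h2 ?_
    have hfun : (fun n : ℕ => L (-((n : ℕ) + 1))) = fun n : ℕ => L (-((n : ℤ) + 1)) := by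
      funext n; norm_num
    rw [hfun]; exact h3
  rw [htot.tsum_eq]
  -- now the algebraic identity
  have hrpow : (1 - c) ^ ((3 : ℝ) / 2) = (1 - c) * Real.sqrt (1 - c) := by
    rw [show (3 : ℝ) / 2 = 1 + 1 / 2 by norm_num, Real.rpow_add h1c, Real.rpow_one,
      ← Real.sqrt_eq_rpow]
  have hsplit : t = Real.sqrt 2 * Real.sqrt (1 - c) := by
    rw [ht, Real.sqrt_mul (by norm_num)]
  have hu2 : Real.sqrt (1 - c) ^ 2 = 1 - c := Real.sq_sqrt h1c.le
  have h2' : Real.sqrt 2 ^ 2 = 2 := Real.sq_sqrt (by norm_num)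
  have hden : 8 * Real.sqrt 2 * (1 - c) ^ ((3 : ℝ) / 2) = 4 * t ^ 3 := by
    rw [hrpow, hsplit]
    linear_combination (-8 * Real.sqrt 2 * Real.sqrt (1 - c)) * hu2 +
      (-4 * Real.sqrt 2 * Real.sqrt (1 - c) ^ 3) * h2'
  rw [hden]
  -- expand the values of L
  rw [hL 1, hL 0, hL (-1)]
  have e4 : ((1 : ℤ) + 1).natAbs = 2 := by omega
  have e5 : ((1 : ℤ)).natAbs = 1 := by omega
  have e6 : ((1 : ℤ) - 1).natAbs = 0 := by omega
  have e7 : ((0 : ℤ) + 1).natAbs = 1 := by omega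
  have e8 : ((0 : ℤ)).natAbs = 0 := by omega
  have e9 : ((0 : ℤ) - 1).natAbs = 1 := by omega
  have e10 : ((-1 : ℤ) + 1).natAbs = 0 := by omega
  have e11 : ((-1 : ℤ)).natAbs = 1 := by omega
  have e12 : ((-1 : ℤ) - 1).natAbs = 2 := by omega
  rw [e4, e5, e6, e7, e8, e9, e10, e11, e12]
  have hnorm2 : ∀ z : ℂ, ‖z‖ ^ 2 = z.re ^ 2 + z.im ^ 2 := by
    intro z
    rw [Complex.sq_norm, Complex.normSq_apply]
    ring
  have n2 : ∀ x y : ℝ, ‖B * (x : ℂ) + A * (y : ℂ)‖ ^ 2 =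
      ‖B‖ ^ 2 * x ^ 2 + ‖A‖ ^ 2 * y ^ 2 + 2 * (A * (starRingEnd ℂ) B).re * (x * y) := by
    intro x y
    simp only [hnorm2, Complex.add_re, Complex.add_im, Complex.mul_re, Complex.mul_im,
      Complex.ofReal_re, Complex.ofReal_im, Complex.conj_re, Complex.conj_im]
    ring
  have m2 : ∀ x y z : ℝ, ‖B * (x : ℂ) + (A + B) * (y : ℂ) + A * (z : ℂ)‖ ^ 2 =
      ‖B‖ ^ 2 * x ^ 2 + (‖A‖ ^ 2 + ‖B‖ ^ 2 + 2 * (A * (starRingEnd ℂ) B).re) * y ^ 2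
        + ‖A‖ ^ 2 * z ^ 2
        + 2 * ((A * (starRingEnd ℂ) B).re + ‖B‖ ^ 2) * (x * y)
        + 2 * (‖A‖ ^ 2 + (A * (starRingEnd ℂ) B).re) * (y * z)
        + 2 * (A * (starRingEnd ℂ) B).re * (x * z) := by
    intro x y z
    simp only [hnorm2, Complex.add_re, Complex.add_im, Complex.mul_re, Complex.mul_im,
      Complex.ofReal_re, Complex.ofReal_im, Complex.conj_re, Complex.conj_im]
    ring
  simp only [← Complex.ofReal_pow, n2, m2]
  generalize ‖A‖ ^ 2 = P
  generalize ‖B‖ ^ 2 = Q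
  generalize (A * (starRingEnd ℂ) B).re = R
  rw [hc', hνt]
  have ht20 : t + 2 ≠ 0 := by linarith
  have ht0' : t ≠ 0 := ne_of_gt ht0
  have h8 : (1:ℝ) - ((t - 2) / (t + 2)) ^ 2 = 8 * t / (t + 2) ^ 2 := by
    field_simp
    ring
  rw [h8]
  field_simp
  ring
end

section
/- Define L : ℤ → ℝ by L(x) = (1/(64(1−c)²))·( 2(1−c)·|B·ν^{|x+1|} + A·ν^{|x|}|² + (1+c)·|B·ν^{|x+1|} + (A+B)·ν^{|x|} + A·ν^{|x−1|}|² + 2(1−c)·|B·ν^{|x|} + A·ν^{|x−1|}|² ). Then there exists x ∈ ℤ with L(x) > 0 if and only if |A|² + |B|² + 2ν·Re(A·conj(B)) > 0. -/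
open Real Complex

set_option maxHeartbeats 1000000 in
/-- localization (`∃ x, L x > 0`) holds iff
`|A|² + |B|² + 2ν·Re(A·conj B) > 0`. -/
theorem stmt_3 (θ : ℝ) (hθ : θ ∈ Set.Ioo 0 (2 * Real.pi)) (hθπ : θ ≠ Real.pi)
    (c s : ℝ) (hc : c = Real.cos θ) (hs : s = Real.sin θ)
    (α β γ : ℂ) (hnorm : ‖α‖ ^ 2 + ‖β‖ ^ 2 + ‖γ‖ ^ 2 = 1)
    (ν : ℝ) (hν : ν = (-(3 - c) + 2 * Real.sqrt (2 * (1 - c))) / (1 + c))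
    (A B : ℂ) (hA : A = ((2 * (1 - c) : ℝ) : ℂ) * α + ((Real.sqrt 2 * s : ℝ) : ℂ) * β)
    (hB : B = ((Real.sqrt 2 * s : ℝ) : ℂ) * β + ((2 * (1 - c) : ℝ) : ℂ) * γ)
    (L : ℤ → ℝ)
    (hL : ∀ x : ℤ, L x = (1 / (64 * (1 - c) ^ 2)) *
        (2 * (1 - c) * ‖B * (ν : ℂ) ^ (x + 1).natAbs + A * (ν : ℂ) ^ x.natAbs‖ ^ 2
          + (1 + c) * ‖B * (ν : ℂ) ^ (x + 1).natAbs + (A + B) * (ν : ℂ) ^ x.natAbs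
              + A * (ν : ℂ) ^ (x - 1).natAbs‖ ^ 2
          + 2 * (1 - c) * ‖B * (ν : ℂ) ^ x.natAbs + A * (ν : ℂ) ^ (x - 1).natAbs‖ ^ 2)) :
    (∃ x : ℤ, 0 < L x) ↔
      0 < ‖A‖ ^ 2 + ‖B‖ ^ 2 + 2 * ν * (A * (starRingEnd ℂ) B).re := by
  obtain ⟨hθ0, hθ2⟩ := hθ
  have hc1 : c < 1 := by
    rcases lt_or_eq_of_le (Real.cos_le_one θ) with h | h
    · rwa [hc]
    · exfalso
      have := (Real.cos_eq_one_iff_of_lt_of_lt (by linarith [Real.pi_pos]) hθ2).1 h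
      linarith
  have hcm1 : -1 < c := by
    rcases lt_or_eq_of_le (Real.neg_one_le_cos θ) with h | h
    · rwa [hc]
    · exfalso
      obtain ⟨k, hk⟩ := Real.cos_eq_neg_one_iff.1 h.symm
      have hπ := Real.pi_pos
      have h1 : (k : ℝ) < 1 := by nlinarith
      have h2 : (-1 : ℝ) < k := by nlinarith
      have h1' : k < 1 := by exact_mod_cast h1
      have h2' : -1 < k := by exact_mod_cast h2
      have hk0 : k = 0 := by omega
      rw [hk0] at hk
      push_cast at hk
      exact hθπ (by linarith)
  have h1c : (0:ℝ) < 1 + c := by linarith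
  have h1c' : (0:ℝ) < 1 - c := by linarith
  set u := Real.sqrt (2 * (1 - c)) with hu
  have hu2 : u ^ 2 = 2 * (1 - c) := Real.sq_sqrt (by linarith)
  have hupos : 0 < u := Real.sqrt_pos.2 (by linarith)
  -- bounds on ν
  have hν0 : ν < 0 := by
    rw [hν]
    apply div_neg_of_neg_of_pos _ h1c
    nlinarith [sq_nonneg (1 + c)]
  have hνm1 : -1 < ν := by
    rw [hν, lt_div_iff₀ h1c]
    nlinarith
  -- bounds on the real part
  have hre : |(A * (starRingEnd ℂ) B).re| ≤ ‖A‖ * ‖B‖ := by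
    calc |(A * (starRingEnd ℂ) B).re| ≤ ‖A * (starRingEnd ℂ) B‖ :=
          Complex.abs_re_le_norm _
      _ = ‖A‖ * ‖B‖ := by
          rw [norm_mul]
          simp
  obtain ⟨hre1, hre2⟩ := abs_le.1 hre
  constructor
  · rintro ⟨x, hx⟩
    by_contra hT
    push_neg at hT
    have hS : ‖A‖ ^ 2 + ‖B‖ ^ 2 ≤ 0 := by nlinarith [sq_nonneg (‖A‖ - ‖B‖)]
    have hA0 : A = 0 := by
      have : ‖A‖ ^ 2 = 0 := le_antisymm (by nlinarith [sq_nonneg ‖B‖]) (sq_nonneg _)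
      simpa [pow_eq_zero_iff] using this
    have hB0 : B = 0 := by
      have : ‖B‖ ^ 2 = 0 := le_antisymm (by nlinarith [sq_nonneg ‖A‖]) (sq_nonneg _)
      simpa [pow_eq_zero_iff] using this
    rw [hL x, hA0, hB0] at hx
    simp at hx
  · intro hT
    refine ⟨0, ?_⟩
    have hSpos : 0 < ‖A‖ ^ 2 + ‖B‖ ^ 2 := by nlinarith [sq_nonneg (‖A‖ - ‖B‖)]
    have hν2 : (ν : ℂ) ^ 2 ≠ 1 := by
      intro h
      have : (ν : ℝ) ^ 2 = 1 := by exact_mod_cast h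
      nlinarith
    have hsum : 0 < ‖B * (ν : ℂ) + A‖ ^ 2 + ‖B + A * (ν : ℂ)‖ ^ 2 := by
      rcases eq_or_ne (B * (ν : ℂ) + A) 0 with h1 | h1
      · have hA' : A = -(ν : ℂ) * B := by linear_combination h1
        have hBne : B ≠ 0 := by
          intro hB0
          rw [hB0, mul_zero] at hA'
          rw [hA', hB0] at hSpos
          simp at hSpos
        have h2 : B + A * (ν : ℂ) = (1 - (ν : ℂ) ^ 2) * B := by
          rw [hA']; ring
        have : B + A * (ν : ℂ) ≠ 0 := by
          rw [h2]
          exact mul_ne_zero (by intro h; exact hν2 (by linear_combination -h)) hBne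
        have := norm_pos_iff.2 this
        nlinarith [sq_nonneg ‖B * (ν : ℂ) + A‖, norm_nonneg (B + A * (ν : ℂ))]
      · have := norm_pos_iff.2 h1
        nlinarith [sq_nonneg ‖B + A * (ν : ℂ)‖, norm_nonneg (B * (ν : ℂ) + A)]
    rw [hL 0]
    have e1 : ((0 : ℤ) + 1).natAbs = 1 := rfl
    have e2 : ((0 : ℤ)).natAbs = 0 := rfl
    have e3 : ((0 : ℤ) - 1).natAbs = 1 := rfl
    rw [e1, e2, e3]
    simp only [pow_one, pow_zero, mul_one]
    apply mul_pos (by positivity)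
    nlinarith [sq_nonneg ‖B * (ν : ℂ) + (A + B) + A * (ν : ℂ)‖,
      mul_pos h1c' hsum]
end

section
/- For every k ∈ ℝ and every λ ∈ ℂ, det(λ·I − Ĉ(k)) = (λ − 1)·(λ − λ₂(k))·(λ − λ₃(k)), where λ_j(k) = ( −((1+c)cos k + (1−c)) + i·(−1)^j·√(4 − ((1+c)cos k + (1−c))²) )/2 for j = 2, 3; in particular 1, λ₂(k), λ₃(k) are the eigenvalues of Ĉ(k). -/
noncomputable section

open Real Complex

/-- The coin matrix of the 3-state quantum walk. -/
def coin (c s : ℝ) : Matrix (Fin 3) (Fin 3) ℂ :=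
  !![((-(1 + c) / 2 : ℝ) : ℂ), ((s / Real.sqrt 2 : ℝ) : ℂ), (((1 - c) / 2 : ℝ) : ℂ);
     ((s / Real.sqrt 2 : ℝ) : ℂ), ((c : ℝ) : ℂ), ((s / Real.sqrt 2 : ℝ) : ℂ);
     (((1 - c) / 2 : ℝ) : ℂ), ((s / Real.sqrt 2 : ℝ) : ℂ), ((-(1 + c) / 2 : ℝ) : ℂ)]

/-- The evolution operator `Ĉ(k) = diag(e^{ik}, 1, e^{−ik})·C` on the Fourier space. -/
def chat (c s : ℝ) (k : ℝ) : Matrix (Fin 3) (Fin 3) ℂ :=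
  Matrix.diagonal ![Complex.exp (Complex.I * k), 1, Complex.exp (-(Complex.I * k))] * coin c s

/-- the characteristic polynomial of `Ĉ(k)` factorizes as
`(λ−1)(λ−λ₂(k))(λ−λ₃(k))`; in particular `1, λ₂(k), λ₃(k)` are the eigenvalues. -/
theorem stmt_6 (θ : ℝ) (hθ : θ ∈ Set.Ioo 0 (2 * Real.pi)) (hθπ : θ ≠ Real.pi)
    (c s : ℝ) (hc : c = Real.cos θ) (hs : s = Real.sin θ)
    (k : ℝ)
    (lam₂ lam₃ : ℂ)
    (hlam₂ : lam₂ = (-(((1 + c) * Real.cos k + (1 - c) : ℝ) : ℂ)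
      + Complex.I * ((Real.sqrt (4 - ((1 + c) * Real.cos k + (1 - c)) ^ 2) : ℝ) : ℂ)) / 2)
    (hlam₃ : lam₃ = (-(((1 + c) * Real.cos k + (1 - c) : ℝ) : ℂ)
      - Complex.I * ((Real.sqrt (4 - ((1 + c) * Real.cos k + (1 - c)) ^ 2) : ℝ) : ℂ)) / 2) :
    (∀ lam : ℂ,
      Matrix.det (lam • (1 : Matrix (Fin 3) (Fin 3) ℂ) - chat c s k)
        = (lam - 1) * (lam - lam₂) * (lam - lam₃)) ∧
    (1 : ℂ) ∈ spectrum ℂ (chat c s k) ∧ lam₂ ∈ spectrum ℂ (chat c s k) ∧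
      lam₃ ∈ spectrum ℂ (chat c s k) := by
  have hc1 : -1 ≤ c := hc ▸ Real.neg_one_le_cos θ
  have hc2 : c ≤ 1 := hc ▸ Real.cos_le_one θ
  have hk1 : -1 ≤ Real.cos k := Real.neg_one_le_cos k
  have hk2 : Real.cos k ≤ 1 := Real.cos_le_one k
  have h4 : (0:ℝ) ≤ 4 - ((1 + c) * Real.cos k + (1 - c)) ^ 2 := by
    have hA : (0:ℝ) ≤ (1 + c) * (1 - Real.cos k) :=
      mul_nonneg (by linarith) (by linarith)
    have hB : (0:ℝ) ≤ (3 - c) + (1 + c) * Real.cos k := by nlinarith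
    nlinarith [mul_nonneg hA hB]
  have hRsq : Real.sqrt (4 - ((1 + c) * Real.cos k + (1 - c)) ^ 2) ^ 2
      = 4 - ((1 + c) * Real.cos k + (1 - c)) ^ 2 := Real.sq_sqrt h4
  set R : ℂ := ((Real.sqrt (4 - ((1 + c) * Real.cos k + (1 - c)) ^ 2) : ℝ) : ℂ) with hR
  have hRC : R ^ 2 = 4 - ((1 + (c:ℂ)) * (Real.cos k : ℂ) + (1 - (c:ℂ))) ^ 2 := by
    rw [hR, ← Complex.ofReal_pow, hRsq]
    push_cast
    ring
  have hsc : (s:ℝ) ^ 2 + c ^ 2 = 1 := by rw [hs, hc]; exact Real.sin_sq_add_cos_sq θ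
  have hs2 : ((Real.sqrt 2 : ℝ) : ℂ) ^ 2 = 2 := by
    norm_cast
    rw [Real.sq_sqrt] <;> norm_num
  have h2 : ((s:ℂ) / (Real.sqrt 2 : ℂ)) ^ 2 = (1 - (c:ℂ) ^ 2) / 2 := by
    rw [div_pow, hs2]
    have hr : s ^ 2 = 1 - c ^ 2 := by linarith
    have hsC : (s:ℂ) ^ 2 = 1 - (c:ℂ) ^ 2 := by
      calc (s:ℂ) ^ 2 = ((s ^ 2 : ℝ) : ℂ) := by push_cast; ring
        _ = ((1 - c ^ 2 : ℝ) : ℂ) := by rw [hr]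
        _ = 1 - (c:ℂ) ^ 2 := by push_cast; ring
    rw [hsC]
  set E : ℂ := Complex.exp (Complex.I * k) with hE
  set F : ℂ := Complex.exp (-(Complex.I * k)) with hF
  have h1 : E * F = 1 := by
    rw [hE, hF, ← Complex.exp_add]
    simp
  have h3 : E + F = 2 * ((Real.cos k : ℝ) : ℂ) := by
    rw [hE, hF, Complex.ofReal_cos, Complex.cos]
    rw [mul_comm Complex.I (k:ℂ)]
    ring
  have hI : Complex.I ^ 2 = -1 := Complex.I_sq
  have hdet : ∀ lam : ℂ,
      Matrix.det (lam • (1 : Matrix (Fin 3) (Fin 3) ℂ) - chat c s k)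
        = (lam - 1) * (lam - lam₂) * (lam - lam₃) := by
    intro lam
    rw [hlam₂, hlam₃]
    rw [Matrix.det_fin_three]
    simp only [chat, coin, Matrix.sub_apply, Matrix.smul_apply, Matrix.one_apply,
      Matrix.mul_apply, Fin.sum_univ_three, Matrix.diagonal_apply, Matrix.cons_val',
      Matrix.cons_val_zero, Matrix.cons_val_one, Matrix.head_cons, Matrix.empty_val',
      Matrix.cons_val_fin_one, Matrix.head_fin_const, Matrix.of_apply,
      Matrix.cons_val_two, Matrix.tail_cons, smul_eq_mul, ← hE, ← hF, ← hR]
    push_cast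
    simp only [← Complex.ofReal_cos]
    linear_combination (lam * (c:ℂ) - (c:ℂ)^2 - 2 * ((s:ℂ)/(Real.sqrt 2 : ℂ))^2) * h1
      + (-2 - lam * F - lam * E) * h2
      + ((lam^2 * (1 + (c:ℂ)) - lam * (1 + (c:ℂ))) / 2) * h3
      + ((lam - 1) * R^2 / 4) * hI
      + (-(lam - 1) / 4) * hRC
  refine ⟨hdet, ?_, ?_, ?_⟩ <;>
  · rw [spectrum.mem_iff]
    intro hu
    rw [Algebra.algebraMap_eq_smul_one] at hu
    rw [Matrix.isUnit_iff_isUnit_det, isUnit_iff_ne_zero] at hu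
    apply hu
    rw [hdet]
    ring
end
end

section
/- Let k ∈ ℝ and let λ be any of the three eigenvalues 1, λ₂(k), λ₃(k) of Ĉ(k), where λ_j(k) = ( −((1+c)cos k + (1−c)) + i·(−1)^j·√(4 − ((1+c)cos k + (1−c))²) )/2 for j = 2, 3. If 1 + λe^{−ik} ≠ 0, 1 + λ ≠ 0 and 1 + λe^{ik} ≠ 0, then the vector w = ( 1/(1 + λe^{−ik}), √2 s/((1−c)(1 + λ)), 1/(1 + λe^{ik}) ) ∈ ℂ³ satisfies Ĉ(k)·w = λ·w. -/
set_option maxHeartbeats 1000000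

noncomputable section

open Real Complex

lemma cancel3x (a b d e x y z : ℂ) (hx : x ≠ 0) (hy : y ≠ 0) (hz : z ≠ 0)
    (h : a * (y * z) + b * (x * z) + d * (x * y) = e * (y * z)) :
    a / x + b / y + d / z = e / x := by
  rw [div_add_div _ _ hx hy, div_add_div _ _ (mul_ne_zero hx hy) hz,
    div_eq_div_iff (mul_ne_zero (mul_ne_zero hx hy) hz) hx]
  linear_combination x * h

lemma cancel3y (a b d e x y z : ℂ) (hx : x ≠ 0) (hy : y ≠ 0) (hz : z ≠ 0)
    (h : a * (y * z) + b * (x * z) + d * (x * y) = e * (x * z)) :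
    a / x + b / y + d / z = e / y := by
  rw [div_add_div _ _ hx hy, div_add_div _ _ (mul_ne_zero hx hy) hz,
    div_eq_div_iff (mul_ne_zero (mul_ne_zero hx hy) hz) hy]
  linear_combination y * h

lemma cancel3z (a b d e x y z : ℂ) (hx : x ≠ 0) (hy : y ≠ 0) (hz : z ≠ 0)
    (h : a * (y * z) + b * (x * z) + d * (x * y) = e * (x * y)) :
    a / x + b / y + d / z = e / z := by
  rw [div_add_div _ _ hx hy, div_add_div _ _ (mul_ne_zero hx hy) hz,
    div_eq_div_iff (mul_ne_zero (mul_ne_zero hx hy) hz) hz]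
  linear_combination z * h

lemma key0 (E F l c : ℂ) (hEF : E * F = 1)
    (hR : (l - 1) * (l ^ 2 + ((1 + c) * (E + F) / 2 + (1 - c)) * l + 1) = 0) :
    E * (-(1 + c) / 2) * ((1 + l) * (1 + l * E)) + E * (1 + c) * ((1 + l * F) * (1 + l * E))
      + E * ((1 - c) / 2) * ((1 + l * F) * (1 + l)) = l * ((1 + l) * (1 + l * E)) := by
  linear_combination (-E) * hR + ((1+c)*l + (1+c)*l^2*E + (1-c)/2*(l+l^2) + (1+c)/2*(l^2-l)) * hEF

lemma key1 (E F l c : ℂ) (hEF : E * F = 1)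
    (hR : (l - 1) * (l ^ 2 + ((1 + c) * (E + F) / 2 + (1 - c)) * l + 1) = 0) :
    (1 - c) * (1 + l) * ((1 + l * E) + (1 + l * F)) + 2 * c * ((1 + l * F) * (1 + l * E))
      = 2 * l * ((1 + l * F) * (1 + l * E)) := by
  linear_combination (-2) * hR + (2*(c - l)*l^2) * hEF

/-- eigenvectors of `Ĉ(k)`: for each eigenvalue `λ ∈ {1, λ₂(k), λ₃(k)}`
with nondegenerate denominators, the stated vector `w` satisfies `Ĉ(k)·w = λ·w`. -/
theorem stmt_7 (θ : ℝ) (hθ : θ ∈ Set.Ioo 0 (2 * Real.pi)) (hθπ : θ ≠ Real.pi)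
    (c s : ℝ) (hc : c = Real.cos θ) (hs : s = Real.sin θ)
    (k : ℝ)
    (lam₂ lam₃ : ℂ)
    (hlam₂ : lam₂ = (-(((1 + c) * Real.cos k + (1 - c) : ℝ) : ℂ)
      + Complex.I * ((Real.sqrt (4 - ((1 + c) * Real.cos k + (1 - c)) ^ 2) : ℝ) : ℂ)) / 2)
    (hlam₃ : lam₃ = (-(((1 + c) * Real.cos k + (1 - c) : ℝ) : ℂ)
      - Complex.I * ((Real.sqrt (4 - ((1 + c) * Real.cos k + (1 - c)) ^ 2) : ℝ) : ℂ)) / 2)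
    (lam : ℂ) (hlam : lam = 1 ∨ lam = lam₂ ∨ lam = lam₃)
    (h₁ : 1 + lam * Complex.exp (-(Complex.I * k)) ≠ 0)
    (h₂ : 1 + lam ≠ 0)
    (h₃ : 1 + lam * Complex.exp (Complex.I * k) ≠ 0)
    (w : Fin 3 → ℂ)
    (hw : w = ![1 / (1 + lam * Complex.exp (-(Complex.I * k))),
      ((Real.sqrt 2 * s : ℝ) : ℂ) / (((1 - c : ℝ) : ℂ) * (1 + lam)),
      1 / (1 + lam * Complex.exp (Complex.I * k))]) :
    (chat c s k).mulVec w = lam • w := by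
  set E := Complex.exp (Complex.I * k) with hE
  set F := Complex.exp (-(Complex.I * k)) with hF
  -- basic real facts
  have hc1R : c < 1 := by
    rcases lt_or_eq_of_le (hc ▸ Real.cos_le_one θ) with h | h
    · exact h
    · exfalso
      obtain ⟨n, hn⟩ := (Real.cos_eq_one_iff θ).1 (by rw [← hc]; exact h)
      have hπ : 0 < Real.pi := Real.pi_pos
      obtain ⟨hθ0, hθ2⟩ := hθ
      have hn0 : (0 : ℝ) < n * (2 * Real.pi) := hn ▸ hθ0
      have hn2 : (n : ℝ) * (2 * Real.pi) < 2 * Real.pi := hn ▸ hθ2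
      have h1 : (0 : ℝ) < (n : ℝ) := by nlinarith
      have h2' : (n : ℝ) < 1 := by nlinarith
      have : (0 : ℤ) < n := by exact_mod_cast h1
      have : (n : ℤ) < 1 := by exact_mod_cast h2'
      omega
  have hcm1 : -1 ≤ c := hc ▸ Real.neg_one_le_cos θ
  have hs2R : s ^ 2 = (1 - c) * (1 + c) := by
    have := Real.sin_sq_add_cos_sq θ
    rw [hs, hc]; nlinarith
  -- complex facts
  have hc1 : (1 : ℂ) - (c : ℂ) ≠ 0 := by
    have h' : ((1 - c : ℝ) : ℂ) ≠ 0 := by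
      exact_mod_cast ne_of_gt (by linarith : (0:ℝ) < 1 - c)
    push_cast at h'
    exact h'
  have hs2 : (s : ℂ) ^ 2 = (1 - (c : ℂ)) * (1 + (c : ℂ)) := by
    exact_mod_cast congrArg (Complex.ofReal) hs2R
  have hr0 : ((Real.sqrt 2 : ℝ) : ℂ) ≠ 0 := by
    have : Real.sqrt 2 ≠ 0 := ne_of_gt (Real.sqrt_pos.2 (by norm_num))
    exact_mod_cast this
  have hrinv : ((Real.sqrt 2 : ℝ) : ℂ) * ((Real.sqrt 2 : ℝ) : ℂ)⁻¹ = 1 := mul_inv_cancel₀ hr0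
  have hrhalf : ((Real.sqrt 2 : ℝ) : ℂ)⁻¹ = ((Real.sqrt 2 : ℝ) : ℂ) / 2 := by
    rw [eq_div_iff (two_ne_zero), inv_mul_eq_div, div_eq_iff hr0]
    have : (Real.sqrt 2) * (Real.sqrt 2) = 2 := Real.mul_self_sqrt (by norm_num)
    exact_mod_cast this.symm
  have hr2 : ((Real.sqrt 2 : ℝ) : ℂ) ^ 2 = 2 := by
    have : (Real.sqrt 2) ^ 2 = 2 := Real.sq_sqrt (by norm_num)
    exact_mod_cast this
  have hEF : E * F = 1 := by
    rw [hE, hF, ← Complex.exp_add]; simp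
  have hcos : E + F = 2 * ((Real.cos k : ℝ) : ℂ) := by
    rw [Complex.ofReal_cos, hE, hF,
      show Complex.I * (k : ℂ) = (k : ℂ) * Complex.I by ring,
      show -((k : ℂ) * Complex.I) = (-(k : ℂ)) * Complex.I by ring,
      Complex.exp_mul_I, Complex.exp_mul_I, Complex.cos_neg, Complex.sin_neg]
    ring
  -- the characteristic relation
  have hR : (lam - 1) * (lam ^ 2 + ((1 + (c : ℂ)) * (E + F) / 2 + (1 - (c : ℂ))) * lam + 1)
      = 0 := by
    have hA : (((1 + c) * Real.cos k + (1 - c) : ℝ) : ℂ)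
        = (1 + (c : ℂ)) * (E + F) / 2 + (1 - (c : ℂ)) := by
      push_cast [← Complex.ofReal_cos]
      linear_combination (-(1 + (c:ℂ)) / 2) * hcos
    have h4 : (0 : ℝ) ≤ 4 - ((1 + c) * Real.cos k + (1 - c)) ^ 2 := by
      have e1 : (0:ℝ) ≤ 2 - ((1 + c) * Real.cos k + (1 - c)) := by
        nlinarith [mul_nonneg (by linarith : (0:ℝ) ≤ 1 + c)
          (by linarith [Real.cos_le_one k] : (0:ℝ) ≤ 1 - Real.cos k)]
      have e2 : (0:ℝ) ≤ 2 + ((1 + c) * Real.cos k + (1 - c)) := by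
        nlinarith [mul_nonneg (by linarith : (0:ℝ) ≤ 1 + c)
          (by linarith [Real.neg_one_le_cos k] : (0:ℝ) ≤ 1 + Real.cos k)]
      nlinarith [mul_nonneg e1 e2]
    have hsq : (((Real.sqrt (4 - ((1 + c) * Real.cos k + (1 - c)) ^ 2)) : ℝ) : ℂ) ^ 2
        = 4 - ((((1 + c) * Real.cos k + (1 - c) : ℝ)) : ℂ) ^ 2 := by
      have := Real.sq_sqrt h4
      exact_mod_cast congrArg (Complex.ofReal) this
    rcases hlam with h | h | h
    · rw [h]; ring
    · have hq : lam ^ 2 + (((1 + c) * Real.cos k + (1 - c) : ℝ) : ℂ) * lam + 1 = 0 := by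
        rw [h, hlam₂]
        linear_combination (Complex.I ^ 2 / 4) * hsq
          + ((4 - ((((1 + c) * Real.cos k + (1 - c) : ℝ)) : ℂ) ^ 2) / 4) * Complex.I_sq
      linear_combination (lam - 1) * hq - (lam * (lam - 1)) * hA
    · have hq : lam ^ 2 + (((1 + c) * Real.cos k + (1 - c) : ℝ) : ℂ) * lam + 1 = 0 := by
        rw [h, hlam₃]
        linear_combination (Complex.I ^ 2 / 4) * hsq
          + ((4 - ((((1 + c) * Real.cos k + (1 - c) : ℝ)) : ℂ) ^ 2) / 4) * Complex.I_sq
      linear_combination (lam - 1) * hq - (lam * (lam - 1)) * hA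
  have hY : (1 - (c : ℂ)) * (1 + lam) ≠ 0 := mul_ne_zero hc1 h₂
  funext i
  fin_cases i <;>
    simp only [chat, coin, Matrix.mulVec, dotProduct, Matrix.mul_apply,
      Fin.sum_univ_three, Matrix.diagonal, hw, Pi.smul_apply, smul_eq_mul,
      Matrix.cons_val', Matrix.cons_val_zero, Matrix.cons_val_one, Matrix.head_cons,
      Matrix.empty_val', Matrix.cons_val_fin_one, Matrix.head_fin_const,
      Matrix.cons_val_two, Matrix.tail_cons, Matrix.of_apply, Fin.isValue,
      Matrix.cons_mul, Matrix.vecMul_cons, Matrix.smul_cons, Matrix.smul_empty,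
      Matrix.empty_mul, Matrix.add_cons, Matrix.empty_add_empty, Matrix.head_add,
      ite_true, ite_false, if_true, if_false, Fin.mk_zero, Fin.mk_one] <;>
    push_cast
  · -- component 0
    have h0 : E * (-(1 + (c:ℂ)) / 2) * (((1 - (c:ℂ)) * (1 + lam)) * (1 + lam * E))
        + E * ((s:ℂ) / (Real.sqrt 2 : ℝ) * ((Real.sqrt 2 : ℝ) * (s:ℂ)))
            * ((1 + lam * F) * (1 + lam * E))
        + E * ((1 - (c:ℂ)) / 2) * ((1 + lam * F) * ((1 - (c:ℂ)) * (1 + lam)))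
        = lam * (((1 - (c:ℂ)) * (1 + lam)) * (1 + lam * E)) := by
      linear_combination (1 - (c:ℂ)) * key0 E F lam (c:ℂ) hEF hR
        + (E * (1 + lam * F) * (1 + lam * E) * (s:ℂ)^2) * hrinv
        + (E * (1 + lam * F) * (1 + lam * E)) * hs2
    have c0 := cancel3x (E * (-(1 + (c:ℂ)) / 2))
      (E * ((s:ℂ) / (Real.sqrt 2 : ℝ) * ((Real.sqrt 2 : ℝ) * (s:ℂ)))) (E * ((1 - (c:ℂ)) / 2))
      lam (1 + lam * F) ((1 - (c:ℂ)) * (1 + lam)) (1 + lam * E) h₁ hY h₃ h0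
    linear_combination c0
  · -- component 1
    have h1 : ((s:ℂ) / (Real.sqrt 2 : ℝ)) * (((1 - (c:ℂ)) * (1 + lam)) * (1 + lam * E))
        + ((c:ℂ) * ((Real.sqrt 2 : ℝ) * (s:ℂ))) * ((1 + lam * F) * (1 + lam * E))
        + ((s:ℂ) / (Real.sqrt 2 : ℝ)) * ((1 + lam * F) * ((1 - (c:ℂ)) * (1 + lam)))
        = (lam * ((Real.sqrt 2 : ℝ) * (s:ℂ))) * ((1 + lam * F) * (1 + lam * E)) := by
      linear_combination ((s:ℂ) / (Real.sqrt 2 : ℝ)) * key1 E F lam (c:ℂ) hEF hR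
        - (2 * ((c:ℂ) - lam) * (s:ℂ) * (1 + lam * F) * (1 + lam * E)) * hrhalf
    have c1 := cancel3y ((s:ℂ) / (Real.sqrt 2 : ℝ)) ((c:ℂ) * ((Real.sqrt 2 : ℝ) * (s:ℂ)))
      ((s:ℂ) / (Real.sqrt 2 : ℝ)) (lam * ((Real.sqrt 2 : ℝ) * (s:ℂ)))
      (1 + lam * F) ((1 - (c:ℂ)) * (1 + lam)) (1 + lam * E) h₁ hY h₃ h1
    linear_combination c1
  · -- component 2
    rw [← hF]
    have hR' : (lam - 1) * (lam ^ 2 + ((1 + (c:ℂ)) * (F + E) / 2 + (1 - (c:ℂ))) * lam + 1)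
        = 0 := by linear_combination hR
    have hFE : F * E = 1 := by linear_combination hEF
    have h2 : (F * ((1 - (c:ℂ)) / 2)) * (((1 - (c:ℂ)) * (1 + lam)) * (1 + lam * E))
        + (F * ((s:ℂ) / (Real.sqrt 2 : ℝ) * ((Real.sqrt 2 : ℝ) * (s:ℂ))))
            * ((1 + lam * F) * (1 + lam * E))
        + (F * (-(1 + (c:ℂ)) / 2)) * ((1 + lam * F) * ((1 - (c:ℂ)) * (1 + lam)))
        = lam * ((1 + lam * F) * ((1 - (c:ℂ)) * (1 + lam))) := by
      linear_combination (1 - (c:ℂ)) * key0 F E lam (c:ℂ) hFE hR'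
        + (F * (1 + lam * F) * (1 + lam * E) * (s:ℂ)^2) * hrinv
        + (F * (1 + lam * F) * (1 + lam * E)) * hs2
    have c2 := cancel3z (F * ((1 - (c:ℂ)) / 2))
      (F * ((s:ℂ) / (Real.sqrt 2 : ℝ) * ((Real.sqrt 2 : ℝ) * (s:ℂ)))) (F * (-(1 + (c:ℂ)) / 2))
      lam (1 + lam * F) ((1 - (c:ℂ)) * (1 + lam)) (1 + lam * E) h₁ hY h₃ h2
    linear_combination c2
end
end

section
/- The coin matrix C factorizes as a product of five rotation-type matrices: C = J·H·R·H·J, where J is the 3×3 real matrix with rows (1,0,0), (0,0,−1), (0,1,0); H is the 3×3 real matrix with rows (1/√2, −1/√2, 0), (1/√2, 1/√2, 0), (0, 0, 1); and R is the 3×3 real matrix with rows (−c, 0, s), (0, 1, 0), (−s, 0, −c). -/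
open Real

/-- the (real) coin matrix `C` factorizes as the product of five
rotation-type matrices `C = J·H·R·H·J`. -/
theorem stmt_8 (θ : ℝ) (hθ : θ ∈ Set.Ioo 0 (2 * Real.pi)) (hθπ : θ ≠ Real.pi)
    (c s : ℝ) (hc : c = Real.cos θ) (hs : s = Real.sin θ)
    (C J H R : Matrix (Fin 3) (Fin 3) ℝ)
    (hC : C = !![-(1 + c) / 2, s / Real.sqrt 2, (1 - c) / 2;
                 s / Real.sqrt 2, c, s / Real.sqrt 2;
                 (1 - c) / 2, s / Real.sqrt 2, -(1 + c) / 2])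
    (hJ : J = !![1, 0, 0; 0, 0, -1; 0, 1, 0])
    (hH : H = !![1 / Real.sqrt 2, -(1 / Real.sqrt 2), 0;
                 1 / Real.sqrt 2, 1 / Real.sqrt 2, 0;
                 0, 0, 1])
    (hR : R = !![-c, 0, s; 0, 1, 0; -s, 0, -c]) :
    C = J * H * R * H * J := by
  have h2 : Real.sqrt 2 ≠ 0 := by positivity
  have hsq : Real.sqrt 2 * Real.sqrt 2 = 2 := Real.mul_self_sqrt (by norm_num)
  subst hC hJ hH hR
  ext i j
  fin_cases i <;> fin_cases j <;>
    simp [Matrix.mul_apply, Fin.sum_univ_succ] <;>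
    field_simp <;> ring_nf <;> rw [Real.sq_sqrt (by norm_num : (2:ℝ) ≥ 0)] <;> ring
end

section
/- For j ∈ {2, 3}, define λ_j : ℝ → ℂ by λ_j(k) = ( −((1+c)cos k + (1−c)) + i·(−1)^j·√(4 − ((1+c)cos k + (1−c))²) )/2. For every k ∈ ℝ with 4 − ((1+c)cos k + (1−c))² > 0, λ_j is differentiable at k and i·λ_j′(k)/λ_j(k) = (−1)^j·(1+c)·sin k / √(4 − ((1+c)cos k + (1−c))²). -/
open Real Complex

/-- for `j ∈ {2,3}`, the eigenvalue branch `λ_j : ℝ → ℂ` is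
differentiable wherever `4 − ((1+c)cos k + (1−c))² > 0`, and
`i·λ_j′(k)/λ_j(k) = (−1)^j (1+c) sin k / √(4 − ((1+c)cos k + (1−c))²)`. -/
theorem stmt_9 (θ : ℝ) (hθ : θ ∈ Set.Ioo 0 (2 * Real.pi)) (hθπ : θ ≠ Real.pi)
    (c s : ℝ) (hc : c = Real.cos θ) (hs : s = Real.sin θ)
    (j : ℕ) (hj : j = 2 ∨ j = 3)
    (lam : ℝ → ℂ)
    (hlam : ∀ k : ℝ, lam k = (-(((1 + c) * Real.cos k + (1 - c) : ℝ) : ℂ)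
      + Complex.I * (-1 : ℂ) ^ j *
        ((Real.sqrt (4 - ((1 + c) * Real.cos k + (1 - c)) ^ 2) : ℝ) : ℂ)) / 2)
    (k : ℝ) (hk : 0 < 4 - ((1 + c) * Real.cos k + (1 - c)) ^ 2) :
    DifferentiableAt ℝ lam k ∧
      Complex.I * deriv lam k / lam k =
        (((-1 : ℝ) ^ j * (1 + c) * Real.sin k /
          Real.sqrt (4 - ((1 + c) * Real.cos k + (1 - c)) ^ 2) : ℝ) : ℂ) := by
  have hlamfun : lam = fun k : ℝ => (-(((1 + c) * Real.cos k + (1 - c) : ℝ) : ℂ)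
      + Complex.I * (-1 : ℂ) ^ j *
        ((Real.sqrt (4 - ((1 + c) * Real.cos k + (1 - c)) ^ 2) : ℝ) : ℂ)) / 2 :=
    funext hlam
  subst hlamfun
  have hf : HasDerivAt (fun k : ℝ => (1 + c) * Real.cos k + (1 - c))
      ((1 + c) * (-Real.sin k)) k :=
    ((Real.hasDerivAt_cos k).const_mul (1 + c)).add_const (1 - c)
  have hg : HasDerivAt (fun k : ℝ => 4 - ((1 + c) * Real.cos k + (1 - c)) ^ 2)
      (-(2 * ((1 + c) * Real.cos k + (1 - c)) ^ 1 * ((1 + c) * (-Real.sin k)))) k :=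
    ((hf.pow 2).const_sub 4)
  have hsq : HasDerivAt (fun k : ℝ => Real.sqrt (4 - ((1 + c) * Real.cos k + (1 - c)) ^ 2))
      ((1 / (2 * Real.sqrt (4 - ((1 + c) * Real.cos k + (1 - c)) ^ 2))) *
        (-(2 * ((1 + c) * Real.cos k + (1 - c)) ^ 1 * ((1 + c) * (-Real.sin k))))) k :=
    (Real.hasDerivAt_sqrt (ne_of_gt hk)).comp k hg
  have hlam' : HasDerivAt (fun k : ℝ => (-(((1 + c) * Real.cos k + (1 - c) : ℝ) : ℂ)
      + Complex.I * (-1 : ℂ) ^ j *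
        ((Real.sqrt (4 - ((1 + c) * Real.cos k + (1 - c)) ^ 2) : ℝ) : ℂ)) / 2)
      ((-(((1 + c) * (-Real.sin k) : ℝ) : ℂ) + Complex.I * (-1 : ℂ) ^ j *
        (((1 / (2 * Real.sqrt (4 - ((1 + c) * Real.cos k + (1 - c)) ^ 2))) *
          (-(2 * ((1 + c) * Real.cos k + (1 - c)) ^ 1 * ((1 + c) * (-Real.sin k)))) : ℝ) : ℂ)) / 2)
      k :=
    ((hf.ofReal_comp.neg.add
      ((hsq.ofReal_comp).const_mul (Complex.I * (-1 : ℂ) ^ j))).div_const 2)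
  have hRpos : 0 < Real.sqrt (4 - ((1 + c) * Real.cos k + (1 - c)) ^ 2) :=
    Real.sqrt_pos.mpr hk
  have hRne : Real.sqrt (4 - ((1 + c) * Real.cos k + (1 - c)) ^ 2) ≠ 0 := hRpos.ne'
  have hRC : ((Real.sqrt (4 - ((1 + c) * Real.cos k + (1 - c)) ^ 2) : ℝ) : ℂ) ≠ 0 := by
    exact_mod_cast hRne
  have key : ∀ ε : ℂ, (ε = 1 ∨ ε = -1) →
      (-(((1 + c) * Real.cos k + (1 - c) : ℝ) : ℂ) + Complex.I * ε *
        ((Real.sqrt (4 - ((1 + c) * Real.cos k + (1 - c)) ^ 2) : ℝ) : ℂ)) / 2 ≠ 0 := by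
    rintro ε (rfl | rfl) h <;>
    · rw [div_eq_zero_iff] at h
      rcases h with h | h
      · have h2 := congrArg Complex.im h
        simp [Complex.add_im, Complex.mul_im, Complex.I_im, Complex.I_re] at h2
        exact hRne (by exact_mod_cast h2)
      · norm_num at h
  refine ⟨hlam'.differentiableAt, ?_⟩
  rw [hlam'.deriv]
  rcases hj with h | h <;> subst h
  · rw [div_eq_iff (key ((-1 : ℂ) ^ (2:ℕ)) (Or.inl (by norm_num)))]
    push_cast
    field_simp
    push_cast
    linear_combination (((c:ℂ) + 1) * Complex.sin (k:ℂ) *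
      ((1 + (c:ℂ)) * Complex.cos (k:ℂ) + (1 - (c:ℂ)))) * Complex.I_sq
  · rw [div_eq_iff (key ((-1 : ℂ) ^ (3:ℕ)) (Or.inr (by norm_num)))]
    push_cast
    field_simp
    push_cast
    linear_combination (-((c:ℂ) + 1) * Complex.sin (k:ℂ) *
      ((1 + (c:ℂ)) * Complex.cos (k:ℂ) + (1 - (c:ℂ)))) * Complex.I_sq
end

section
/- Assume |β| = √((1−c)/2) and α = γ = −(√2 s/(2(1−c)))·β. Then Δ = 0, d₀ = 2, d₁ = 0 and d₂ = 0; consequently the continuous part of the limit density reduces to f(x) = √(1−c)/(π(1−x²)√(1+c−2x²)) for |x| < √((1+c)/2), i.e. the limit distribution has no Dirac mass at the origin and coincides with the limit density of a 2-state quantum walk. -/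
set_option maxHeartbeats 1000000


open Real Complex

/-- if `|β| = √((1−c)/2)` and `α = γ = −(√2 s/(2(1−c)))β`, then
`Δ = 0`, `d₀ = 2`, `d₁ = 0`, `d₂ = 0`, and the continuous part of the limit
density reduces to `√(1−c)/(π(1−x²)√(1+c−2x²))` on `|x| < √((1+c)/2)` (the
limit density of a 2-state quantum walk, with no Dirac mass at the origin). -/
theorem stmt_19 (θ : ℝ) (hθ : θ ∈ Set.Ioo 0 (2 * Real.pi)) (hθπ : θ ≠ Real.pi)
    (c s : ℝ) (hc : c = Real.cos θ) (hs : s = Real.sin θ)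
    (α β γ : ℂ) (hnorm : ‖α‖ ^ 2 + ‖β‖ ^ 2 + ‖γ‖ ^ 2 = 1)
    (hβ : ‖β‖ = Real.sqrt ((1 - c) / 2))
    (hαγ : α = γ) (hα : α = -((Real.sqrt 2 * s / (2 * (1 - c)) : ℝ) : ℂ) * β)
    (ν : ℝ) (hν : ν = (-(3 - c) + 2 * Real.sqrt (2 * (1 - c))) / (1 + c))
    (A B : ℂ) (hA : A = ((2 * (1 - c) : ℝ) : ℂ) * α + ((Real.sqrt 2 * s : ℝ) : ℂ) * β)
    (hB : B = ((Real.sqrt 2 * s : ℝ) : ℂ) * β + ((2 * (1 - c) : ℝ) : ℂ) * γ)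
    (Δ : ℝ) (hΔ : Δ = (1 / (8 * Real.sqrt 2 * (1 - c) ^ ((3 : ℝ) / 2))) *
      (‖A‖ ^ 2 + ‖B‖ ^ 2 + 2 * ν * (A * (starRingEnd ℂ) B).re))
    (d₀ d₁ d₂ : ℝ)
    (hd₀ : d₀ = ‖α + γ‖ ^ 2 + 2 * ‖β‖ ^ 2)
    (hd₁ : d₁ = 2 * (-‖α - β‖ ^ 2 + ‖γ - β‖ ^ 2
      - (2 - Real.sqrt 2 * s / (1 + c)) * ((α - γ) * (starRingEnd ℂ) β).re))
    (hd₂ : d₂ = ‖α‖ ^ 2 - 2 * ‖β‖ ^ 2 + ‖γ‖ ^ 2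
      - 2 * ((Real.sqrt 2 * s / (1 + c)) * ((α + γ) * (starRingEnd ℂ) β).re
        + ((3 - c) / (1 + c)) * (α * (starRingEnd ℂ) γ).re))
    (f : ℝ → ℝ)
    (hf : ∀ y : ℝ, f y = (Real.sqrt (1 - c) /
        (2 * Real.pi * (1 - y ^ 2) * Real.sqrt (1 + c - 2 * y ^ 2)))
        * (d₀ + d₁ * y + d₂ * y ^ 2)) :
    Δ = 0 ∧ d₀ = 2 ∧ d₁ = 0 ∧ d₂ = 0 ∧
    ∀ x : ℝ, |x| < Real.sqrt ((1 + c) / 2) →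
      f x = Real.sqrt (1 - c) /
        (Real.pi * (1 - x ^ 2) * Real.sqrt (1 + c - 2 * x ^ 2)) := by
  obtain ⟨hθ0, hθ2⟩ := hθ
  have hπ := Real.pi_pos
  -- c < 1
  have hc1 : c < 1 := by
    rcases lt_or_eq_of_le (Real.cos_le_one θ) with h | h
    · exact hc ▸ h
    · exfalso
      have := (Real.cos_eq_one_iff_of_lt_of_lt (by linarith) hθ2).1 h
      linarith
  -- -1 < c
  have hc2 : -1 < c := by
    rcases lt_or_eq_of_le (Real.neg_one_le_cos θ) with h | h
    · exact hc ▸ h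
    · exfalso
      obtain ⟨k, hk⟩ := Real.cos_eq_neg_one_iff.1 h.symm
      have hk1 : (k : ℝ) < 1 := by nlinarith
      have hk2 : (-1 : ℝ) < k := by nlinarith
      have hk1' : k < 1 := by exact_mod_cast hk1
      have hk2' : (-1 : ℤ) < k := by exact_mod_cast hk2
      have : k = 0 := by omega
      subst this
      simp at hk
      exact hθπ hk.symm
  have h1c : (0:ℝ) < 1 - c := by linarith
  have h1c' : (0:ℝ) < 1 + c := by linarith
  have hs2 : s ^ 2 = 1 - c ^ 2 := by
    have := Real.sin_sq_add_cos_sq θ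
    rw [hs, hc]; nlinarith
  have h2 : Real.sqrt 2 ^ 2 = 2 := Real.sq_sqrt (by norm_num)
  have hβ2 : ‖β‖ ^ 2 = (1 - c) / 2 := by
    rw [hβ, Real.sq_sqrt (by linarith)]
  set k : ℝ := -(Real.sqrt 2 * s / (2 * (1 - c))) with hk
  have hmulsq : ∀ (r : ℝ) (z : ℂ), ‖(r : ℂ) * z‖ ^ 2 = r ^ 2 * ‖z‖ ^ 2 := by
    intro r z
    simp [norm_mul, mul_pow, sq_abs]
  have hαk : α = (k : ℂ) * β := by rw [hα, hk]; push_cast; ring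
  have hγk : γ = (k : ℂ) * β := hαγ ▸ hαk
  have ht2 : (Real.sqrt 2 * s) ^ 2 = 2 * (1 - c ^ 2) := by
    rw [mul_pow, h2, hs2]
  have hk2 : k ^ 2 = (1 + c) / (2 * (1 - c)) := by
    rw [hk, neg_sq, div_pow, ht2]
    rw [div_eq_div_iff (by nlinarith) (by nlinarith)]
    ring
  -- A = 0, B = 0
  have hA0 : A = 0 := by
    rw [hA, hαk, hk]
    push_cast
    have : ((2:ℂ) * (1 - (c:ℂ))) ≠ 0 := by
      intro h
      have : (1:ℝ) - c = 0 := by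
        have := congrArg Complex.re h
        simpa using this
      linarith
    field_simp [right_ne_zero_of_mul this]
    ring
  have hB0 : B = 0 := by
    rw [hB, hγk, hk]
    push_cast
    have : ((2:ℂ) * (1 - (c:ℂ))) ≠ 0 := by
      intro h
      have : (1:ℝ) - c = 0 := by
        have := congrArg Complex.re h
        simpa using this
      linarith
    field_simp [right_ne_zero_of_mul this]
    ring
  have hΔ0 : Δ = 0 := by rw [hΔ, hA0, hB0]; simp
  -- re terms
  have hnormSq : Complex.normSq β = (1 - c) / 2 := by
    rw [← Complex.sq_norm]; exact hβ2
  have hre1 : ((α + γ) * (starRingEnd ℂ) β).re = 2 * k * ((1 - c) / 2) := by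
    rw [hαk, hγk, ← hnormSq]
    have : ((k:ℂ) * β + (k:ℂ) * β) * (starRingEnd ℂ) β
        = ((2 * k * Complex.normSq β : ℝ) : ℂ) := by
      rw [Complex.ofReal_mul, ← Complex.mul_conj]; push_cast; ring
    rw [this, Complex.ofReal_re]
  have hre2 : (α * (starRingEnd ℂ) γ).re = k ^ 2 * ((1 - c) / 2) := by
    rw [hαk, hγk, ← hnormSq]
    have : ((k:ℂ) * β) * (starRingEnd ℂ) ((k:ℂ) * β)
        = ((k ^ 2 * Complex.normSq β : ℝ) : ℂ) := by
      rw [map_mul, Complex.conj_ofReal]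
      rw [show (k:ℂ) * β * ((k:ℂ) * (starRingEnd ℂ) β) = (k:ℂ)^2 * (β * (starRingEnd ℂ) β) by ring,
        Complex.mul_conj]
      push_cast; ring
    rw [this, Complex.ofReal_re]
  have hα2 : ‖α‖ ^ 2 = k ^ 2 * ((1 - c) / 2) := by
    rw [hαk, hmulsq, hβ2]
  have hγ2 : ‖γ‖ ^ 2 = k ^ 2 * ((1 - c) / 2) := by rw [← hαγ]; exact hα2
  have hαγ2 : ‖α + γ‖ ^ 2 = 4 * k ^ 2 * ((1 - c) / 2) := by
    rw [hαk, hγk, show (k:ℂ) * β + (k:ℂ) * β = ((2*k : ℝ):ℂ) * β by push_cast; ring,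
      hmulsq, hβ2]
    ring
  have hd₀2 : d₀ = 2 := by
    rw [hd₀, hαγ2, hβ2, hk2]
    field_simp
    ring
  have hd₁0 : d₁ = 0 := by
    rw [hd₁, hαγ]
    simp
  have hd₂0 : d₂ = 0 := by
    rw [hd₂, hα2, hγ2, hβ2, hre1, hre2, hk2, hk]
    field_simp
    linear_combination (64 * (1 - c) ^ 3 * (1 + c) + (64 * c ^ 4 - 128 * c ^ 3 + 128 * c - 60)) * ht2
  refine ⟨hΔ0, hd₀2, hd₁0, hd₂0, fun x _ => ?_⟩
  rw [hf x, hd₀2, hd₁0, hd₂0]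
  rw [show (2:ℝ) + 0 * x + 0 * x ^ 2 = 2 by ring]
  rw [div_mul_eq_mul_div, mul_comm]
  rw [show 2 * Real.pi * (1 - x ^ 2) * Real.sqrt (1 + c - 2 * x ^ 2)
      = 2 * (Real.pi * (1 - x ^ 2) * Real.sqrt (1 + c - 2 * x ^ 2)) by ring]
  rw [mul_div_mul_left _ _ (two_ne_zero)]
end
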